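/- arXiv:2303.15637 — 3 statements merged into one kernel-verified Lean document; each statement's English description precedes it below -/
import Mathlib

section
/- In the scalar LQR setting with Q = R = 1, the optimal gain K = −abP/(b^2 P + 1) satisfies K = −bP·a_cl where a_cl = a + bK is the closed-loop coefficient, and |a_cl| < 1. -/
/-!
With `d = b²P + 1`, the closed-loop coefficient is `a_cl = a / d`, so both the gain identity and
the DARE become rational identities in `a, b, P`. The DARE is equivalent to the closed-loop
Lyapunov equation `P = 1 + K² + a_cl² P`; since `P > 0`, this forces `a_cl² P < P`, i.e. `|a_cl| < 1`.
-/

noncomputable def lqrGain (a b P : ℝ) : ℝ := -(a * b * P) / (b ^ 2 * P + 1)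

noncomputable def closedLoopCoeff (a b P : ℝ) : ℝ := a + b * lqrGain a b P

section

variable {a b P : ℝ}

lemma closedLoopCoeff_eq_div (hd : b ^ 2 * P + 1 ≠ 0) :
    closedLoopCoeff a b P = a / (b ^ 2 * P + 1) := by
  unfold closedLoopCoeff lqrGain
  field_simp
  ring

lemma lqrGain_eq_neg_mul_closedLoopCoeff (hd : b ^ 2 * P + 1 ≠ 0) :
    lqrGain a b P = -(b * P) * closedLoopCoeff a b P := by
  rw [closedLoopCoeff_eq_div hd, lqrGain]
  ring

lemma lyapunov_rhs_eq_dare_rhs (hd : b ^ 2 * P + 1 ≠ 0) :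
    1 + lqrGain a b P ^ 2 + closedLoopCoeff a b P ^ 2 * P
      = 1 + a ^ 2 * P - (a * b * P) ^ 2 / (b ^ 2 * P + 1) := by
  rw [lqrGain_eq_neg_mul_closedLoopCoeff hd, closedLoopCoeff_eq_div hd]
  field_simp
  ring

end

lemma abs_lt_one_of_lyapunov {x k P : ℝ} (hP : 0 < P) (h : P = 1 + k ^ 2 + x ^ 2 * P) :
    |x| < 1 := by
  have hxP : x ^ 2 * P < 1 * P := by linarith [sq_nonneg k]
  exact sq_lt_one_iff_abs_lt_one x |>.mp (lt_of_mul_lt_mul_right hxP hP.le)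

/-- Scalar LQR with `Q = R = 1`: if `P > 0` is the stabilizing solution of the
scalar DARE `P = 1 + a²P − (abP)²/(b²P + 1)`, then the optimal gain
`K = −abP/(b²P + 1)` satisfies `K = −bP·a_cl` where `a_cl = a + bK`, and
`|a_cl| < 1`. -/
theorem scalar_lqr_gain (a b P : ℝ) (hP : 0 < P)
    (hdare : P = 1 + a ^ 2 * P - (a * b * P) ^ 2 / (b ^ 2 * P + 1)) :
    -(a * b * P) / (b ^ 2 * P + 1)
        = -(b * P) * (a + b * (-(a * b * P) / (b ^ 2 * P + 1)))
    ∧ |a + b * (-(a * b * P) / (b ^ 2 * P + 1))| < 1 := by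
  have hd : b ^ 2 * P + 1 ≠ 0 := by positivity
  rw [← lyapunov_rhs_eq_dare_rhs hd] at hdare
  exact ⟨lqrGain_eq_neg_mul_closedLoopCoeff hd, abs_lt_one_of_lyapunov hP hdare⟩
end

section
/- Consider the n×n upper bidiagonal matrix A with ρ ∈ (0,1) on the diagonal and 2 on the superdiagonal, B = e_n (the last standard basis vector), Q = I, R = 1. Then the (n,n) entry of P = dare(A,B,Q,R) satisfies P_{nn} ≥ 4^{n−2}. -/
/-!
Completing the square in the Riccati equation with the gain `K = (BᵀPB + R)⁻¹BᵀPA` gives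
`P = Q + KᵀRK + (A - BK)ᵀP(A - BK)`. With `Q = I`, `R = 1` and `P ⪰ 0` this makes
`x ↦ xᵀPx` a Lyapunov function for the closed-loop matrix `M = A - BK` that drops by at least
`|x|²` per step, so `xᵀPx ≥ |Mᵗx|²` for every `t`. Since `B = eₙ`, the matrix `M` agrees with
the bidiagonal `A` outside its last row, so `Mᵗeₙ` has the entry `2ᵗ` in position `n - t`.
Taking `x = eₙ` and `t = n - 2` gives `Pₙₙ ≥ 4^(n-2)`.
-/

open Matrix

section Riccati

variable {ι m α : Type*} [Fintype ι] [Fintype m] [CommRing α]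

theorem dotProduct_transpose_mul_mul_mulVec (P : Matrix m m α) (N : Matrix m ι α) (x : ι → α) :
    x ⬝ᵥ ((Nᵀ * P * N) *ᵥ x) = (N *ᵥ x) ⬝ᵥ (P *ᵥ (N *ᵥ x)) := by
  rw [← mulVec_mulVec, ← mulVec_mulVec, dotProduct_mulVec, vecMul_transpose]

variable [DecidableEq m]

noncomputable def dareGain (A P : Matrix ι ι α) (B : Matrix ι m α) (R : Matrix m m α) :
    Matrix m ι α :=
  (Bᵀ * P * B + R)⁻¹ * (Bᵀ * P * A)

theorem lyapunov_closedLoop_eq_of_dare {Q P A : Matrix ι ι α} {B : Matrix ι m α}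
    {R : Matrix m m α} (hS : IsUnit (Bᵀ * P * B + R).det)
    (hdare : Q + Aᵀ * P * A - Aᵀ * P * B * (Bᵀ * P * B + R)⁻¹ * (Bᵀ * P * A) = P) :
    Q + (dareGain A P B R)ᵀ * R * dareGain A P B R
      + (A - B * dareGain A P B R)ᵀ * P * (A - B * dareGain A P B R) = P := by
  set S := Bᵀ * P * B + R
  set K := dareGain A P B R
  have hSK : S * K = Bᵀ * P * A := mul_nonsing_inv_cancel_left _ _ hS
  calc _ = Q + Aᵀ * P * A - Aᵀ * P * B * K + (Kᵀ * (S * K) - Kᵀ * (Bᵀ * P * A)) := by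
        simp only [S, transpose_sub, transpose_mul, Matrix.mul_add, Matrix.add_mul,
          Matrix.sub_mul, Matrix.mul_sub, Matrix.mul_assoc]
        abel
    _ = Q + Aᵀ * P * A - Aᵀ * P * B * S⁻¹ * (Bᵀ * P * A) := by
        rw [hSK, sub_self, add_zero, Matrix.mul_assoc (Aᵀ * P * B)]
        rfl
    _ = P := hdare

end Riccati

theorem sq_le_dotProduct_self {ι : Type*} [Fintype ι] (v : ι → ℝ) (i : ι) :
    v i ^ 2 ≤ v ⬝ᵥ v := by
  rw [sq]
  exact Finset.single_le_sum (f := fun j => v j * v j) (fun j _ => mul_self_nonneg _)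
    (Finset.mem_univ i)

section Lyapunov

variable {ι m : Type*} [Fintype ι] [DecidableEq ι] [Fintype m] [DecidableEq m]

theorem dotProduct_self_add_closedLoop_le_of_dare {P A : Matrix ι ι ℝ} {B : Matrix ι m ℝ}
    (hP : P.PosSemidef)
    (hdare : 1 + Aᵀ * P * A - Aᵀ * P * B * (Bᵀ * P * B + 1)⁻¹ * (Bᵀ * P * A) = P)
    (x : ι → ℝ) :
    x ⬝ᵥ x + ((A - B * dareGain A P B 1) *ᵥ x) ⬝ᵥ (P *ᵥ ((A - B * dareGain A P B 1) *ᵥ x))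
      ≤ x ⬝ᵥ (P *ᵥ x) := by
  have hS : IsUnit (Bᵀ * P * B + 1).det := by
    rw [← isUnit_iff_isUnit_det]
    simpa using (PosDef.posSemidef_add (hP.conjTranspose_mul_mul_same B) PosDef.one).isUnit
  have hq := congrArg (fun X => x ⬝ᵥ (X *ᵥ x)) (lyapunov_closedLoop_eq_of_dare hS hdare)
  simp only [add_mulVec, dotProduct_add, one_mulVec, dotProduct_transpose_mul_mul_mulVec] at hq
  have hgain : 0 ≤ (dareGain A P B 1 *ᵥ x) ⬝ᵥ (dareGain A P B 1 *ᵥ x) := by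
    simpa using dotProduct_star_self_nonneg (dareGain A P B 1 *ᵥ x)
  linarith

theorem dotProduct_pow_mulVec_le_of_lyapunov {P M : Matrix ι ι ℝ} (hP : P.PosSemidef)
    (h : ∀ x, x ⬝ᵥ x + (M *ᵥ x) ⬝ᵥ (P *ᵥ (M *ᵥ x)) ≤ x ⬝ᵥ (P *ᵥ x)) (x : ι → ℝ) (t : ℕ) :
    (M ^ t *ᵥ x) ⬝ᵥ (M ^ t *ᵥ x) ≤ x ⬝ᵥ (P *ᵥ x) := by
  have hP0 (y : ι → ℝ) : 0 ≤ y ⬝ᵥ (P *ᵥ y) := by simpa using hP.dotProduct_mulVec_nonneg y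
  have hsq (y : ι → ℝ) : 0 ≤ y ⬝ᵥ y := by simpa using dotProduct_star_self_nonneg y
  have hdecr (s : ℕ) : (M ^ s *ᵥ x) ⬝ᵥ (P *ᵥ (M ^ s *ᵥ x)) ≤ x ⬝ᵥ (P *ᵥ x) := by
    induction s with
    | zero => simp
    | succ s ih =>
      rw [pow_succ', ← mulVec_mulVec]
      linarith [h (M ^ s *ᵥ x), hsq (M ^ s *ᵥ x)]
  linarith [h (M ^ t *ᵥ x), hP0 (M *ᵥ (M ^ t *ᵥ x)), hdecr t]

end Lyapunov

section Bidiagonal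

variable {n : ℕ} {M : Matrix (Fin (n + 1)) (Fin (n + 1)) ℝ} {d s : ℝ}

theorem mulVec_castSucc_of_bidiagonal
    (hM : ∀ (i : Fin n) j,
      M i.castSucc j = if j = i.castSucc then d else if j = i.succ then s else 0)
    (x : Fin (n + 1) → ℝ) (i : Fin n) :
    (M *ᵥ x) i.castSucc = d * x i.castSucc + s * x i.succ := by
  have hne : i.castSucc ≠ i.succ := Fin.castSucc_lt_succ.ne
  rw [mulVec, dotProduct, Fintype.sum_eq_add _ _ hne (fun j hj => by simp [hM, hj.1, hj.2])]
  simp [hM, hne.symm]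

theorem pow_mulVec_single_last
    (hM : ∀ (x : Fin (n + 1) → ℝ) (i : Fin n),
      (M *ᵥ x) i.castSucc = d * x i.castSucc + s * x i.succ)
    {t : ℕ} (ht : t ≤ n) :
    (∀ j : Fin (n + 1), (j : ℕ) + t < n → (M ^ t *ᵥ Pi.single (Fin.last n) 1) j = 0) ∧
      (M ^ t *ᵥ Pi.single (Fin.last n) 1) ⟨n - t, by omega⟩ = s ^ t := by
  induction t with
  | zero =>
    refine ⟨fun j hj => ?_, by simp [Fin.last]⟩
    rw [pow_zero, one_mulVec, Pi.single_eq_of_ne (fun h => by simp [h] at hj)]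
  | succ t ih =>
    obtain ⟨hzero, hcorner⟩ := ih (by omega)
    rw [pow_succ', ← mulVec_mulVec]
    refine ⟨fun j hj => ?_, ?_⟩
    · obtain ⟨i, rfl⟩ : ∃ i : Fin n, i.castSucc = j := ⟨⟨j, by omega⟩, rfl⟩
      rw [Fin.val_castSucc] at hj
      rw [hM, hzero _ (by rw [Fin.val_castSucc]; omega), hzero _ (by rw [Fin.val_succ]; omega)]
      ring
    · have hidx : (⟨n - (t + 1), by omega⟩ : Fin n).succ = ⟨n - t, by omega⟩ :=
        Fin.ext (by simp only [Fin.succ_mk]; omega)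
      have h := hM (M ^ t *ᵥ Pi.single (Fin.last n) 1) ⟨n - (t + 1), by omega⟩
      rw [hidx, hcorner, hzero _ (by simp only [Fin.castSucc_mk]; omega)] at h
      rw [pow_succ']
      exact h.trans (by ring)

end Bidiagonal

/-- For the `n×n` upper bidiagonal matrix `A` with `ρ ∈ (0,1)` on the diagonal and
`2` on the superdiagonal, `B = eₙ`, `Q = I`, `R = 1`, the `(n,n)` entry of the
stabilizing DARE solution `P` satisfies `Pₙₙ ≥ 4^(n−2)`. -/
theorem dare_corner_entry_exponential (n : ℕ) (hn : 2 ≤ n) (ρ : ℝ)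
    (A : Matrix (Fin n) (Fin n) ℝ)
    (hA : A = Matrix.of fun i j : Fin n =>
      if (j : ℕ) = (i : ℕ) then ρ else if (j : ℕ) = (i : ℕ) + 1 then 2 else 0)
    (B : Matrix (Fin n) (Fin 1) ℝ)
    (hB : B = Matrix.of fun (i : Fin n) (_ : Fin 1) =>
      if (i : ℕ) = n - 1 then (1 : ℝ) else 0)
    (P : Matrix (Fin n) (Fin n) ℝ)
    (hPpsd : P.PosSemidef)
    -- P solves the DARE with Q = I, R = 1
    (hdare : 1 + Aᵀ * P * A
        - Aᵀ * P * B * (Bᵀ * P * B + 1)⁻¹ * (Bᵀ * P * A) = P) :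
    (4 : ℝ) ^ (n - 2) ≤ P ⟨n - 1, by omega⟩ ⟨n - 1, by omega⟩ := by
  obtain ⟨k, rfl⟩ : ∃ k, n = k + 1 := ⟨n - 1, by omega⟩
  set M := A - B * dareGain A P B 1
  set e : Fin (k + 1) → ℝ := Pi.single (Fin.last k) 1
  have hrow (i : Fin k) (j : Fin (k + 1)) :
      M i.castSucc j = if j = i.castSucc then ρ else if j = i.succ then 2 else 0 := by
    simp [M, hA, hB, Matrix.sub_apply, Matrix.mul_apply, Fin.ext_iff, i.isLt.ne]
  obtain ⟨-, hcorner⟩ :=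
    pow_mulVec_single_last (mulVec_castSucc_of_bidiagonal hrow) (t := k - 1) (by omega)
  calc (4 : ℝ) ^ (k + 1 - 2) = ((M ^ (k - 1) *ᵥ e) ⟨k - (k - 1), by omega⟩) ^ 2 := by
        rw [hcorner, ← pow_mul, show (4 : ℝ) = 2 ^ 2 by norm_num, ← pow_mul]
        congr 1
        omega
    _ ≤ (M ^ (k - 1) *ᵥ e) ⬝ᵥ (M ^ (k - 1) *ᵥ e) := sq_le_dotProduct_self _ _
    _ ≤ e ⬝ᵥ (P *ᵥ e) := dotProduct_pow_mulVec_le_of_lyapunov hPpsd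
        (dotProduct_self_add_closedLoop_le_of_dare hPpsd hdare) e (k - 1)
    _ = P ⟨k + 1 - 1, by omega⟩ ⟨k + 1 - 1, by omega⟩ := by
        rw [single_one_dotProduct, mulVec_single_one]
        rfl
end

section
/- Let A_cl be Schur stable with 𝒥(A_cl) := Σ_{t=0}^∞ ||A_cl^t||^2 < ∞, and let K, K̂ satisfy ||K̂ − K|| ≤ min{||A_cl||/||B||, 1/(6 𝒥(A_cl) ||B|| ||A_cl||)} where A_cl = A + BK. Define P_1^0 = P_2^0 = Σ_W and recursions P_1^t = (A+BK̂)P_1^{t−1}(A+BK̂)^T + Σ_W, P_2^t = A_cl P_2^{t−1} A_cl^T + Σ_W. Then (1/T)|| Σ_{t=0}^{T−1} (P_1^t − P_2^t) || ≤ 6 𝒥(A_cl) ||B|| ||A_cl|| ||Σ_X|| ||K̂ − K||, where Σ_X = dlyap(A_cl^T, Σ_W). -/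
open Matrix

/-- The spectral (operator) norm of a real matrix. -/
noncomputable def specNorm {m n : ℕ} (M : Matrix (Fin m) (Fin n) ℝ) : ℝ :=
  ‖LinearMap.toContinuousLinearMap (Matrix.toEuclideanLin M)‖

/-!
Put `Δ = B (K̂ - K)`. The difference `D t = P₁ t - P₂ t` obeys the Lyapunov recursion
`D (t + 1) = A_cl D t A_clᵀ + F t` with `D 0 = 0` and forcing
`F t = Δ P₁ t (A_cl + Δ)ᵀ + A_cl P₁ t Δᵀ`, so `‖D t‖ ≤ 𝒥 · max_{u < t} ‖F u‖`.
Since `P₂ t` is a partial sum of the positive semidefinite series defining `Σ_X` and the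
spectral norm is monotone in the Loewner order (Rayleigh quotients), `‖P₂ t‖ ≤ ‖Σ_X‖`; and
`‖Δ‖ ≤ ‖A_cl‖` gives `‖F u‖ ≤ 3 ‖A_cl‖ ‖Δ‖ (‖Σ_X‖ + ‖D u‖)`. The smallness condition
`6 𝒥 ‖A_cl‖ ‖Δ‖ ≤ 1` makes `‖D t‖ ≤ 6 𝒥 ‖A_cl‖ ‖Δ‖ ‖Σ_X‖` self-propagating under strong
induction, and averaging over `t < T` keeps the bound.
-/

open scoped Matrix.Norms.L2Operator MatrixOrder

theorem specNorm_eq_l2_opNorm {m n : ℕ} (M : Matrix (Fin m) (Fin n) ℝ) : specNorm M = ‖M‖ := rfl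

theorem eq_pow_mul_mul_pow_add_sum_of_recursion {R : Type*} [Semiring R] {a b : R}
    {X F : ℕ → R} (hX : ∀ t, X (t + 1) = a * X t * b + F t) (t : ℕ) :
    X t = a ^ t * X 0 * b ^ t + ∑ s ∈ Finset.range t, a ^ s * F (t - (s + 1)) * b ^ s := by
  induction t with
  | zero => simp
  | succ t ih =>
    rw [hX, ih, Finset.sum_range_succ']
    simp only [Nat.add_sub_add_right, add_mul, mul_add, Finset.mul_sum, Finset.sum_mul,
      pow_succ' a, pow_succ b, mul_assoc, pow_zero, one_mul, mul_one, add_tsub_cancel_right]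
    abel

section NormedStarRing

variable {R : Type*} [NormedRing R] [StarRing R] [NormedStarGroup R]

theorem norm_pow_mul_mul_star_pow_le (a x : R) (s : ℕ) :
    ‖a ^ s * x * star a ^ s‖ ≤ ‖a ^ s‖ ^ 2 * ‖x‖ :=
  calc ‖a ^ s * x * star a ^ s‖ ≤ ‖a ^ s‖ * ‖x‖ * ‖star (a ^ s)‖ := by
        rw [← star_pow]; exact (norm_mul_le _ _).trans (by gcongr; exact norm_mul_le _ _)
    _ = ‖a ^ s‖ ^ 2 * ‖x‖ := by rw [norm_star]; ring

theorem summable_pow_mul_mul_star_pow [CompleteSpace R] {a : R}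
    (hJ : Summable fun s ↦ ‖a ^ s‖ ^ 2) (w : R) : Summable fun s ↦ a ^ s * w * star a ^ s :=
  .of_norm_bounded (hJ.mul_right ‖w‖) (norm_pow_mul_mul_star_pow_le a w)

theorem norm_sum_pow_mul_mul_star_pow_le {a : R} {F : ℕ → R} {β : ℝ} {t : ℕ}
    (hJ : Summable fun s ↦ ‖a ^ s‖ ^ 2) (hβ : 0 ≤ β) (hF : ∀ u < t, ‖F u‖ ≤ β) :
    ‖∑ s ∈ Finset.range t, a ^ s * F (t - (s + 1)) * star a ^ s‖ ≤ (∑' s, ‖a ^ s‖ ^ 2) * β :=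
  calc ‖∑ s ∈ Finset.range t, a ^ s * F (t - (s + 1)) * star a ^ s‖
      ≤ ∑ s ∈ Finset.range t, ‖a ^ s‖ ^ 2 * β := by
        refine (norm_sum_le _ _).trans (Finset.sum_le_sum fun s hs ↦ ?_)
        refine (norm_pow_mul_mul_star_pow_le a _ s).trans ?_
        gcongr
        exact hF _ (by have := Finset.mem_range.1 hs; omega)
    _ = (∑ s ∈ Finset.range t, ‖a ^ s‖ ^ 2) * β := by rw [Finset.sum_mul]
    _ ≤ (∑' s, ‖a ^ s‖ ^ 2) * β := by
        gcongr; exact hJ.sum_le_tsum _ fun s _ ↦ by positivity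

theorem norm_sub_le_of_perturbed_lyapunov_recursion {a d w : R} {P₁ P₂ : ℕ → R} {S : ℝ}
    (hJ : Summable fun s ↦ ‖a ^ s‖ ^ 2) (hd : ‖d‖ ≤ ‖a‖)
    (hsmall : 6 * (∑' s, ‖a ^ s‖ ^ 2) * ‖a‖ * ‖d‖ ≤ 1)
    (hP₁0 : P₁ 0 = w) (hP₂0 : P₂ 0 = w)
    (hP₁ : ∀ t, P₁ (t + 1) = (a + d) * P₁ t * star (a + d) + w)
    (hP₂ : ∀ t, P₂ (t + 1) = a * P₂ t * star a + w)
    (hP₂S : ∀ t, ‖P₂ t‖ ≤ S) (t : ℕ) :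
    ‖P₁ t - P₂ t‖ ≤ 6 * (∑' s, ‖a ^ s‖ ^ 2) * ‖a‖ * ‖d‖ * S := by
  set J := ∑' s, ‖a ^ s‖ ^ 2
  have hS : 0 ≤ S := (norm_nonneg _).trans (hP₂S 0)
  set F : ℕ → R := fun u ↦ d * P₁ u * star (a + d) + a * P₁ u * star d
  have hrec (u : ℕ) : P₁ (u + 1) - P₂ (u + 1) = a * (P₁ u - P₂ u) * star a + F u := by
    simp only [hP₁, hP₂, F, star_add]; noncomm_ring
  have hF (u : ℕ) : ‖F u‖ ≤ 3 * ‖a‖ * ‖d‖ * ‖P₁ u‖ := by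
    have h₁ : ‖d * P₁ u * star (a + d)‖ ≤ ‖d‖ * ‖P₁ u‖ * (2 * ‖a‖) := by
      refine (norm_mul_le _ _).trans ?_
      gcongr
      · exact norm_mul_le _ _
      · rw [norm_star]; linarith [norm_add_le a d]
    have h₂ : ‖a * P₁ u * star d‖ ≤ ‖a‖ * ‖P₁ u‖ * ‖d‖ := by
      rw [← norm_star d]; exact (norm_mul_le _ _).trans (by gcongr; exact norm_mul_le _ _)
    linarith [norm_add_le (d * P₁ u * star (a + d)) (a * P₁ u * star d)]
  induction t using Nat.strong_induction_on with
  | _ t ih =>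
    have hclosed := eq_pow_mul_mul_pow_add_sum_of_recursion (X := fun u ↦ P₁ u - P₂ u) hrec t
    rw [hP₁0, hP₂0, sub_self, mul_zero, zero_mul, zero_add] at hclosed
    rw [hclosed]
    refine (norm_sum_pow_mul_mul_star_pow_le hJ (by positivity) fun u hu ↦ ?_).trans_eq
      (by ring : J * (6 * ‖a‖ * ‖d‖ * S) = _)
    have hP₁u : ‖P₁ u‖ ≤ 2 * S := calc
      ‖P₁ u‖ ≤ ‖P₂ u‖ + ‖P₁ u - P₂ u‖ := norm_le_insert' _ _
      _ ≤ S + 1 * S := add_le_add (hP₂S u) ((ih u hu).trans (by gcongr))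
      _ = 2 * S := by ring
    calc ‖F u‖ ≤ 3 * ‖a‖ * ‖d‖ * (2 * S) := (hF u).trans (by gcongr)
      _ = 6 * ‖a‖ * ‖d‖ * S := by ring

end NormedStarRing

theorem one_div_mul_norm_sum_range_le {E : Type*} [SeminormedAddCommGroup E] {x : ℕ → E} {c : ℝ}
    (hc : 0 ≤ c) (hx : ∀ t, ‖x t‖ ≤ c) (T : ℕ) :
    1 / (T : ℝ) * ‖∑ t ∈ Finset.range T, x t‖ ≤ c := by
  rcases T.eq_zero_or_pos with rfl | hT
  · simpa using hc
  · have hsum := norm_sum_le_of_le (Finset.range T) fun t _ ↦ hx t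
    rw [Finset.sum_const, Finset.card_range, nsmul_eq_mul] at hsum
    rw [one_div_mul_eq_div, div_le_iff₀ (by positivity)]
    linarith

theorem ContinuousLinearMap.norm_le_norm_of_nonneg_of_le {𝕜 E : Type*} [RCLike 𝕜]
    [NormedAddCommGroup E] [InnerProductSpace 𝕜 E] {T S : E →L[𝕜] E} (hT : 0 ≤ T) (hTS : T ≤ S) :
    ‖T‖ ≤ ‖S‖ := by
  rw [nonneg_iff_isPositive] at hT
  rw [le_def] at hTS
  have hS : S.IsSymmetric := by simpa using (hTS.add hT).isSymmetric
  rw [T.norm_eq_iSup_rayleighQuotient hT.isSymmetric, S.norm_eq_iSup_rayleighQuotient hS]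
  refine ciSup_mono S.bddAbove_rayleighQuotient fun x ↦ ?_
  have h0 : 0 ≤ T.reApplyInnerSelf x := hT.re_inner_nonneg_left x
  have h1 : 0 ≤ (S - T).reApplyInnerSelf x := hTS.re_inner_nonneg_left x
  simp only [reApplyInnerSelf_apply, _root_.sub_apply, inner_sub_left, map_sub,
    sub_nonneg] at h0 h1
  simp only [rayleighQuotient, reApplyInnerSelf_apply]
  rw [abs_of_nonneg (by positivity), abs_of_nonneg (by positivity [h0.trans h1])]
  gcongr

section MatrixL2

variable {𝕜 n : Type*} [RCLike 𝕜] [Fintype n] [DecidableEq n]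

theorem Matrix.l2_opNorm_le_of_nonneg_of_le {M N : Matrix n n 𝕜} (hM : 0 ≤ M) (hMN : M ≤ N) :
    ‖M‖ ≤ ‖N‖ := by
  have hpos {X : Matrix n n 𝕜} (hX : 0 ≤ X) : (toEuclideanCLM (n := n) (𝕜 := 𝕜) X).IsPositive := by
    rw [← ContinuousLinearMap.isPositive_toLinearMap_iff, coe_toEuclideanCLM_eq_toEuclideanLin,
      isPositive_toEuclideanLin_iff]
    exact hX.posSemidef
  rw [cstar_norm_def M, cstar_norm_def N]
  refine ContinuousLinearMap.norm_le_norm_of_nonneg_of_le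
    ((ContinuousLinearMap.nonneg_iff_isPositive _).2 (hpos hM)) ?_
  rw [ContinuousLinearMap.le_def, ← map_sub]
  exact hpos (sub_nonneg.2 hMN)

theorem Matrix.l2_opNorm_sum_range_le_tsum {f : ℕ → Matrix n n 𝕜} (hf : ∀ k, 0 ≤ f k)
    (hs : Summable f) (t : ℕ) : ‖∑ k ∈ Finset.range t, f k‖ ≤ ‖∑' k, f k‖ := by
  refine ge_of_tendsto hs.hasSum.tendsto_sum_nat.norm
    (Filter.eventually_atTop.2 ⟨t, fun m hm ↦ ?_⟩)
  exact l2_opNorm_le_of_nonneg_of_le (Finset.sum_nonneg fun k _ ↦ hf k)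
    (Finset.sum_le_sum_of_subset_of_nonneg (Finset.range_subset_range.2 hm) fun k _ _ ↦ hf k)

theorem Matrix.l2_opNorm_lyapunov_iterate_le {a w : Matrix n n 𝕜} {P : ℕ → Matrix n n 𝕜}
    (hJ : Summable fun s ↦ ‖a ^ s‖ ^ 2) (hw : 0 ≤ w)
    (hP0 : P 0 = w) (hP : ∀ t, P (t + 1) = a * P t * star a + w) (t : ℕ) :
    ‖P t‖ ≤ ‖∑' k, a ^ k * w * star a ^ k‖ := by
  have hsum : P t = ∑ k ∈ Finset.range (t + 1), a ^ k * w * star a ^ k := by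
    rw [eq_pow_mul_mul_pow_add_sum_of_recursion (F := fun _ ↦ w) hP t, hP0,
      Finset.sum_range_succ, add_comm]
  rw [hsum]
  refine l2_opNorm_sum_range_le_tsum (fun k ↦ ?_) (summable_pow_mul_mul_star_pow hJ w) _
  rw [← star_pow]
  exact star_right_conjugate_nonneg hw _

end MatrixL2

theorem lyapunov_recursion_perturbation_general (nx nu : ℕ)
    (A SigW : Matrix (Fin nx) (Fin nx) ℝ) (B : Matrix (Fin nx) (Fin nu) ℝ)
    (K Khat : Matrix (Fin nu) (Fin nx) ℝ)
    (hSigW : SigW.PosDef)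
    (hJ : Summable (fun t : ℕ => specNorm ((A + B * K) ^ t) ^ 2))
    (hgap : specNorm (Khat - K)
      ≤ min (specNorm (A + B * K) / specNorm B)
          (1 / (6 * (∑' t : ℕ, specNorm ((A + B * K) ^ t) ^ 2)
            * specNorm B * specNorm (A + B * K))))
    (P₁ P₂ : ℕ → Matrix (Fin nx) (Fin nx) ℝ)
    (hP₁0 : P₁ 0 = SigW) (hP₂0 : P₂ 0 = SigW)
    (hP₁ : ∀ t, P₁ (t + 1) = (A + B * Khat) * P₁ t * (A + B * Khat)ᵀ + SigW)
    (hP₂ : ∀ t, P₂ (t + 1) = (A + B * K) * P₂ t * (A + B * K)ᵀ + SigW)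
    (T : ℕ) :
    (1 / (T : ℝ)) * specNorm (∑ t ∈ Finset.range T, (P₁ t - P₂ t))
      ≤ 6 * (∑' t : ℕ, specNorm ((A + B * K) ^ t) ^ 2)
          * specNorm B * specNorm (A + B * K)
          * specNorm (∑' k : ℕ, (A + B * K) ^ k * SigW * ((A + B * K)ᵀ) ^ k)
          * specNorm (Khat - K) := by
  simp only [specNorm_eq_l2_opNorm, ← conjTranspose_eq_transpose_of_trivial,
    ← star_eq_conjTranspose] at *
  set Acl := A + B * K
  set J := ∑' t, ‖Acl ^ t‖ ^ 2
  set Δ := B * (Khat - K)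
  have hΔ : ‖Δ‖ ≤ ‖B‖ * ‖Khat - K‖ := l2_opNorm_mul _ _
  obtain ⟨hgap₁, hgap₂⟩ := le_min_iff.1 hgap
  have hΔAcl : ‖Δ‖ ≤ ‖Acl‖ :=
    hΔ.trans (by rw [mul_comm]; exact mul_le_of_le_div₀ (norm_nonneg _) (norm_nonneg _) hgap₁)
  have hsmall : 6 * J * ‖Acl‖ * ‖Δ‖ ≤ 1 := calc
    6 * J * ‖Acl‖ * ‖Δ‖ ≤ 6 * J * ‖Acl‖ * (‖B‖ * ‖Khat - K‖) := by gcongr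
    _ = ‖Khat - K‖ * (6 * J * ‖B‖ * ‖Acl‖) := by ring
    _ ≤ 1 := mul_le_of_le_div₀ zero_le_one (by positivity) hgap₂
  have hP₁' (t : ℕ) : P₁ (t + 1) = (Acl + Δ) * P₁ t * star (Acl + Δ) + SigW := by
    rw [hP₁, show A + B * Khat = Acl + Δ by simp only [Acl, Δ, Matrix.mul_sub]; abel]
  have hP₂S := l2_opNorm_lyapunov_iterate_le hJ hSigW.posSemidef.nonneg hP₂0 hP₂
  refine (one_div_mul_norm_sum_range_le (by positivity)
    (norm_sub_le_of_perturbed_lyapunov_recursion hJ hΔAcl hsmall hP₁0 hP₂0 hP₁' hP₂ hP₂S) T).trans ?_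
  calc 6 * J * ‖Acl‖ * ‖Δ‖ * ‖∑' k, Acl ^ k * SigW * star Acl ^ k‖
      ≤ 6 * J * ‖Acl‖ * (‖B‖ * ‖Khat - K‖) * ‖∑' k, Acl ^ k * SigW * star Acl ^ k‖ := by gcongr
    _ = _ := by ring

/-- Lyapunov recursion perturbation bound: if `‖K̂ − K‖` is small enough, the
partial covariance recursions under `K̂` and `K` stay close, with
`(1/T)‖∑ₜ (P₁ᵗ − P₂ᵗ)‖ ≤ 6 𝒥(A_cl) ‖B‖ ‖A_cl‖ ‖Σ_X‖ ‖K̂ − K‖`. -/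
theorem lyapunov_recursion_perturbation (nx nu : ℕ)
    (A SigW : Matrix (Fin nx) (Fin nx) ℝ) (B : Matrix (Fin nx) (Fin nu) ℝ)
    (K Khat : Matrix (Fin nu) (Fin nx) ℝ)
    (hSigW : SigW.PosDef)
    (hρ : spectralRadius ℂ ((A + B * K).map (algebraMap ℝ ℂ)) < 1)
    (hJ : Summable (fun t : ℕ => specNorm ((A + B * K) ^ t) ^ 2))
    (hgap : specNorm (Khat - K)
      ≤ min (specNorm (A + B * K) / specNorm B)
          (1 / (6 * (∑' t : ℕ, specNorm ((A + B * K) ^ t) ^ 2)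
            * specNorm B * specNorm (A + B * K))))
    (P₁ P₂ : ℕ → Matrix (Fin nx) (Fin nx) ℝ)
    (hP₁0 : P₁ 0 = SigW) (hP₂0 : P₂ 0 = SigW)
    (hP₁ : ∀ t, P₁ (t + 1) = (A + B * Khat) * P₁ t * (A + B * Khat)ᵀ + SigW)
    (hP₂ : ∀ t, P₂ (t + 1) = (A + B * K) * P₂ t * (A + B * K)ᵀ + SigW)
    (T : ℕ) :
    (1 / (T : ℝ)) * specNorm (∑ t ∈ Finset.range T, (P₁ t - P₂ t))
      ≤ 6 * (∑' t : ℕ, specNorm ((A + B * K) ^ t) ^ 2)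
          * specNorm B * specNorm (A + B * K)
          * specNorm (∑' k : ℕ, (A + B * K) ^ k * SigW * ((A + B * K)ᵀ) ^ k)
          * specNorm (Khat - K) :=
  lyapunov_recursion_perturbation_general nx nu A SigW B K Khat hSigW hJ hgap P₁ P₂ hP₁0 hP₂0 hP₁
    hP₂ T
end
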